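/- Let n ≥ 2, let u, f : E → ℝ be smooth functions on E = EuclideanSpace ℝ (Fin n) with Δ_f u = 0, and let m > n be a real constant. Then at every point x with ∇u(x) ≠ 0, the function h = |∇u| is smooth near x and satisfies h·Δ_f h ≥ |∇h|²/(m−1) + Hess f(∇u, ∇u) − ⟨∇f, ∇u⟩²/(m−n), i.e. h·Δ_f h ≥ |∇h|²/(m−1) + Ric_{m,n}(∇u, ∇u). -/

import Mathlib

open MeasureTheory Real Filter
open scoped RealInnerProductSpace ENNReal Topology

noncomputable section

/-- The Hessian of `u` at `x`, applied to the pair of vectors `(v, w)`. -/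
def hess {n : ℕ} (u : EuclideanSpace ℝ (Fin n) → ℝ) (x v w : EuclideanSpace ℝ (Fin n)) : ℝ :=
  fderiv ℝ (fun y => fderiv ℝ u y w) x v

/-- The Euclidean Laplacian `Δu = trace (Hess u)`. -/
def lap {n : ℕ} (u : EuclideanSpace ℝ (Fin n) → ℝ) (x : EuclideanSpace ℝ (Fin n)) : ℝ :=
  ∑ i, hess u x (EuclideanSpace.single i 1) (EuclideanSpace.single i 1)

/-- The weighted (`f`-)Laplacian `Δ_f u = Δu − ⟨∇f, ∇u⟩`. -/
def fLap {n : ℕ} (f u : EuclideanSpace ℝ (Fin n) → ℝ) (x : EuclideanSpace ℝ (Fin n)) : ℝ :=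
  lap u x - ⟪gradient f x, gradient u x⟫

/-- The weighted measure `e^{−f}·dv` on `ℝⁿ`. -/
def wMeasure (n : ℕ) (f : EuclideanSpace ℝ (Fin n) → ℝ) :
    Measure (EuclideanSpace ℝ (Fin n)) :=
  volume.withDensity fun x => ENNReal.ofReal (Real.exp (-f x))





variable {n : ℕ} {y : EuclideanSpace ℝ (Fin n)}

local notation "E" => EuclideanSpace ℝ (Fin n)

def ee (n : ℕ) (i : Fin n) : EuclideanSpace ℝ (Fin n) := EuclideanSpace.single i 1

def pd (i : Fin n) (g : EuclideanSpace ℝ (Fin n) → ℝ) : EuclideanSpace ℝ (Fin n) → ℝ :=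
  fun y => fderiv ℝ g y (ee n i)

lemma pd_contDiff {g : EuclideanSpace ℝ (Fin n) → ℝ} (hg : ContDiff ℝ (⊤ : ℕ∞) g) (i : Fin n) :
    ContDiff ℝ (⊤ : ℕ∞) (pd i g) := by
  have h1 : ContDiff ℝ (⊤ : ℕ∞) (fderiv ℝ g) := hg.fderiv_right (by simp)
  exact h1.clm_apply contDiff_const

lemma inner_gradient (g : EuclideanSpace ℝ (Fin n) → ℝ) (y v : EuclideanSpace ℝ (Fin n)) :
    ⟪gradient g y, v⟫ = fderiv ℝ g y v := by
  simp [gradient, InnerProductSpace.toDual_symm_apply]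

lemma gradient_coord (g : EuclideanSpace ℝ (Fin n) → ℝ) (y : EuclideanSpace ℝ (Fin n)) (i : Fin n) :
    gradient g y i = pd i g y := by
  have h := inner_gradient g y (ee n i)
  simp only [ee, EuclideanSpace.inner_single_right, map_one, one_mul, RCLike.inner_apply,
    starRingEnd_apply, star_trivial] at h
  simpa [pd, ee] using h

lemma inner_gradients (f g : EuclideanSpace ℝ (Fin n) → ℝ) (y : EuclideanSpace ℝ (Fin n)) :
    ⟪gradient f y, gradient g y⟫ = ∑ i, pd i f y * pd i g y := by
  rw [PiLp.inner_apply]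
  refine Finset.sum_congr rfl fun i _ => ?_
  simp [gradient_coord, RCLike.inner_apply, mul_comm]

lemma norm_grad_sq (g : EuclideanSpace ℝ (Fin n) → ℝ) (y : EuclideanSpace ℝ (Fin n)) :
    ‖gradient g y‖ ^ 2 = ∑ i, pd i g y ^ 2 := by
  rw [← real_inner_self_eq_norm_sq, inner_gradients]
  exact Finset.sum_congr rfl fun i _ => (sq (pd i g y)).symm

lemma fderiv_clm_eq {g : EuclideanSpace ℝ (Fin n) → ℝ} (hg : ContDiff ℝ (⊤ : ℕ∞) g)
    (y v w : EuclideanSpace ℝ (Fin n)) :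
    fderiv ℝ (fun z => fderiv ℝ g z w) y v = fderiv ℝ (fderiv ℝ g) y v w := by
  have hd : HasFDerivAt (fderiv ℝ g) (fderiv ℝ (fderiv ℝ g) y) y :=
    ((hg.fderiv_right (m := (⊤ : ℕ∞)) (by simp)).differentiable (by simp) y).hasFDerivAt
  have h2 := hd.clm_apply (hasFDerivAt_const w y)
  rw [h2.fderiv]
  simp

lemma pd_comm {g : EuclideanSpace ℝ (Fin n) → ℝ} (hg : ContDiff ℝ (⊤ : ℕ∞) g) (i j : Fin n) :
    pd i (pd j g) = pd j (pd i g) := by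
  funext y
  show fderiv ℝ (fun z => fderiv ℝ g z (ee n j)) y (ee n i)
      = fderiv ℝ (fun z => fderiv ℝ g z (ee n i)) y (ee n j)
  rw [fderiv_clm_eq hg, fderiv_clm_eq hg]
  exact second_derivative_symmetric (f := g) (f' := fderiv ℝ g)
    (fun z => (hg.differentiable (by simp) z).hasFDerivAt)
    (((hg.fderiv_right (m := (⊤ : ℕ∞)) (by simp)).differentiable (by simp) y).hasFDerivAt) _ _

lemma euclid_decomp (v : EuclideanSpace ℝ (Fin n)) : v = ∑ i, v i • ee n i := by
  ext j
  symm
  have h1 : (∑ i, v i • ee n i) j = ∑ i, (v i • ee n i) j :=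
    by rw [WithLp.ofLp_sum, Finset.sum_apply]
  rw [h1]
  simp [ee, EuclideanSpace.single_apply]

lemma fderiv_eq_sum {g : EuclideanSpace ℝ (Fin n) → ℝ} (y : EuclideanSpace ℝ (Fin n))
    (v : EuclideanSpace ℝ (Fin n)) :
    fderiv ℝ g y v = ∑ i, v i * pd i g y := by
  conv_lhs => rw [euclid_decomp v]
  rw [map_sum]
  exact Finset.sum_congr rfl fun i _ => by rw [ContinuousLinearMap.map_smul]; simp [pd]

lemma hess_eq_sum {f : EuclideanSpace ℝ (Fin n) → ℝ} (hf : ContDiff ℝ (⊤ : ℕ∞) f)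
    (x v w : EuclideanSpace ℝ (Fin n)) :
    hess f x v w = ∑ j, w j * ∑ i, v i * pd i (pd j f) x := by
  have h1 : (fun y => fderiv ℝ f y w) = fun y => ∑ j, w j * pd j f y := by
    funext y; exact fderiv_eq_sum y w
  show fderiv ℝ (fun y => fderiv ℝ f y w) x v = _
  rw [h1]
  have h2 : ∀ j : Fin n, DifferentiableAt ℝ (fun y => w j * pd j f y) x :=
    fun j => (((pd_contDiff hf j).differentiable (by simp)) x).const_mul _
  rw [show (fun y => ∑ j, w j * pd j f y) = fun y => ∑ j ∈ Finset.univ, w j * pd j f y from rfl]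
  rw [fderiv_fun_sum fun j _ => h2 j]
  rw [ContinuousLinearMap.sum_apply]
  refine Finset.sum_congr rfl fun j _ => ?_
  rw [fderiv_const_mul ((pd_contDiff hf j).differentiable (by simp) x)]
  simp only [ContinuousLinearMap.coe_smul', Pi.smul_apply, smul_eq_mul]
  rw [fderiv_eq_sum]

lemma lap_eq (g : EuclideanSpace ℝ (Fin n) → ℝ) (y : EuclideanSpace ℝ (Fin n)) :
    lap g y = ∑ i, pd i (pd i g) y := rfl

lemma pd_sum {ι : Type*} (s : Finset ι) (g : ι → EuclideanSpace ℝ (Fin n) → ℝ)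
    (hg : ∀ j ∈ s, ContDiff ℝ (⊤ : ℕ∞) (g j)) (i : Fin n) (y : EuclideanSpace ℝ (Fin n)) :
    pd i (fun z => ∑ j ∈ s, g j z) y = ∑ j ∈ s, pd i (g j) y := by
  unfold pd
  rw [fderiv_fun_sum fun j hj => ((hg j hj).differentiable (by simp)) y]
  rw [ContinuousLinearMap.sum_apply]

lemma pd_mul {a b : EuclideanSpace ℝ (Fin n) → ℝ} (ha : DifferentiableAt ℝ a y)
    (hb : DifferentiableAt ℝ b y) (i : Fin n) :
    pd i (fun z => a z * b z) y = pd i a y * b y + a y * pd i b y := by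
  unfold pd
  rw [fderiv_fun_mul ha hb]
  simp only [ContinuousLinearMap.add_apply, ContinuousLinearMap.coe_smul', Pi.smul_apply,
    smul_eq_mul]
  ring



lemma key_quad (b d a t : ℝ) (hb : 1 ≤ b) (hd : 0 < d) :
    t ^ 2 / (b + d) ≤ (a - t) ^ 2 / b + a ^ 2 / d := by
  have hb0 : 0 < b := by linarith
  rw [div_add_div _ _ (ne_of_gt hb0) (ne_of_gt hd), div_le_div_iff₀ (by linarith) (by positivity)]
  nlinarith [sq_nonneg ((a - t) * d + a * b), sq_nonneg (a - t), sq_nonneg a, mul_pos hb0 hd]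

lemma alg (n : ℕ) (hn : 2 ≤ n) (m : ℝ) (hm : (n : ℝ) < m)
    (M : Fin n → Fin n → ℝ) (hM : ∀ i j, M i j = M j i)
    (c : Fin n → ℝ) (hc : ∑ i, c i ^ 2 = 1) :
    ∑ i, ∑ j, M i j ^ 2 ≥ (∑ i, (∑ j, M i j * c j) ^ 2) +
      (∑ i, (∑ j, M i j * c j) ^ 2) / (m - 1) - (∑ i, M i i) ^ 2 / (m - n) := by
  have hn1 : (1:ℝ) ≤ (n:ℝ) - 1 := by
    have : (2:ℝ) ≤ (n:ℝ) := by exact_mod_cast hn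
    linarith
  have hn1' : (0:ℝ) < (n:ℝ) - 1 := by linarith
  have hmn : (0:ℝ) < m - (n:ℝ) := by linarith
  have hm1 : (1:ℝ) < m - 1 := by
    have : (2:ℝ) ≤ (n:ℝ) := by exact_mod_cast hn
    linarith
  set w : Fin n → ℝ := fun i => ∑ j, M i j * c j with hw
  set a : ℝ := ∑ i, M i i with ha
  set t : ℝ := ∑ i, w i * c i with ht
  set γ : ℝ := (a - t) / ((n:ℝ) - 1) with hγ
  set p : Fin n → ℝ := fun i => w i - t * c i with hp
  set r : Fin n → ℝ := fun i => w i - γ * c i with hr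
  -- basic scalar identities
  have hcp : ∑ i, c i * p i = 0 := by
    have : ∀ i, c i * p i = w i * c i - t * c i ^ 2 := by intro i; simp [hp]; ring
    simp only [this, Finset.sum_sub_distrib, ← Finset.mul_sum, hc]
    simp [← ht]
  have hpw : ∑ i, p i * w i = ∑ i, p i ^ 2 := by
    have : ∀ i, p i * w i = p i ^ 2 + t * (c i * p i) := by intro i; simp [hp]; ring
    simp only [this, Finset.sum_add_distrib, ← Finset.mul_sum, hcp]
    ring
  have hrc : ∑ i, r i * c i = t - γ := by
    have : ∀ i, r i * c i = w i * c i - γ * c i ^ 2 := by intro i; simp [hr]; ring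
    simp only [this, Finset.sum_sub_distrib, ← Finset.mul_sum, hc, ← ht]
    ring
  have hws : ∑ i, w i ^ 2 = t ^ 2 + ∑ i, p i ^ 2 := by
    have : ∀ i, w i ^ 2 = p i ^ 2 + 2 * t * (c i * p i) + t ^ 2 * c i ^ 2 := by
      intro i; simp [hp]; ring
    simp only [this, Finset.sum_add_distrib, ← Finset.mul_sum, hcp, hc]
    ring
  have hrr : ∑ i, r i ^ 2 = (∑ i, w i ^ 2) - 2 * γ * t + γ ^ 2 := by
    have : ∀ i, r i ^ 2 = w i ^ 2 - 2 * γ * (w i * c i) + γ ^ 2 * c i ^ 2 := by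
      intro i; simp [hr]; ring
    simp only [this, Finset.sum_add_distrib, Finset.sum_sub_distrib, ← Finset.mul_sum, hc, ← ht]
    ring
  -- column sums of M
  have hcol : ∀ j, ∑ i, M i j * c i = w j := by
    intro j
    rw [hw]
    exact Finset.sum_congr rfl fun i _ => by rw [hM i j]
  set s : ℝ := ∑ i, p i ^ 2 with hs
  have hs0 : 0 ≤ s := Finset.sum_nonneg fun i _ => sq_nonneg _
  set X : Fin n → Fin n → ℝ := fun i j => c i * r j + p i * c j + (if i = j then γ else 0) with hX
  -- ∑ M X
  have hMX : ∑ i, ∑ j, M i j * X i j = (∑ i, w i ^ 2) - γ * t + s + γ * a := by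
    have h1 : ∀ i j, M i j * X i j =
        c i * (M i j * r j) + p i * (M i j * c j) + (if i = j then γ * M i j else 0) := by
      intro i j; rw [hX]; simp only [mul_ite, mul_zero]
      rcases eq_or_ne i j with h | h <;> simp [h] <;> ring
    simp only [h1, Finset.sum_add_distrib]
    have e1 : ∑ i, ∑ j, c i * (M i j * r j) = (∑ j, w j ^ 2) - γ * t := by
      rw [Finset.sum_comm]
      have : ∀ j, ∑ i, c i * (M i j * r j) = r j * w j := by
        intro j
        have : ∑ i, c i * (M i j * r j) = ∑ i, r j * (M i j * c i) :=
          Finset.sum_congr rfl fun i _ => by ring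
        rw [this, ← Finset.mul_sum, hcol j]
      simp only [this]
      have : ∀ j, r j * w j = w j ^ 2 - γ * (w j * c j) := by intro j; simp [hr]; ring
      simp only [this, Finset.sum_sub_distrib, ← Finset.mul_sum, ← ht]
    have e2 : ∑ i, ∑ j, p i * (M i j * c j) = s := by
      have : ∀ i, ∑ j, p i * (M i j * c j) = p i * w i := by
        intro i; rw [← Finset.mul_sum]
      simp only [this, hpw, hs]
    have e3 : ∑ i, ∑ j, (if i = j then γ * M i j else 0) = γ * a := by
      have : ∀ i, ∑ j, (if i = j then γ * M i j else 0) = γ * M i i := by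
        intro i; simp
      simp only [this, ← Finset.mul_sum, ← ha]
    rw [e1, e2, e3]
  -- ∑ X²
  have hXX : ∑ i, ∑ j, X i j ^ 2 = t ^ 2 + 2 * s + γ ^ 2 * ((n:ℝ) - 1) := by
    have h1 : ∀ i j, X i j ^ 2 = c i ^ 2 * r j ^ 2 + p i ^ 2 * c j ^ 2
        + 2 * (c i * p i) * (r j * c j)
        + (if i = j then 2 * (c i * r j + p i * c j) * γ + γ ^ 2 else 0) := by
      intro i j; rw [hX]
      rcases eq_or_ne i j with h | h <;> simp [h] <;> ring
    simp only [h1, Finset.sum_add_distrib]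
    have e1 : ∑ i, ∑ j, c i ^ 2 * r j ^ 2 = ∑ j, r j ^ 2 := by
      rw [← Finset.sum_mul_sum, hc, one_mul]
    have e2 : ∑ i, ∑ j, p i ^ 2 * c j ^ 2 = s := by
      rw [← Finset.sum_mul_sum, hc, mul_one, ← hs]
    have e3 : ∑ i, ∑ j, 2 * (c i * p i) * (r j * c j) = 0 := by
      have : ∑ i, ∑ j, 2 * (c i * p i) * (r j * c j)
          = (∑ i, 2 * (c i * p i)) * (∑ j, r j * c j) := by rw [← Finset.sum_mul_sum]
      rw [this, ← Finset.mul_sum, hcp]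
      ring
    have e4 : ∑ i, ∑ j, (if i = j then 2 * (c i * r j + p i * c j) * γ + γ ^ 2 else 0)
        = 2 * γ * (t - γ) + 2 * γ * 0 + γ ^ 2 * n := by
      have h2 : ∀ i, ∑ j, (if i = j then 2 * (c i * r j + p i * c j) * γ + γ ^ 2 else 0)
          = 2 * γ * (c i * r i) + 2 * γ * (p i * c i) + γ ^ 2 := by
        intro i; rw [Finset.sum_ite_eq]; simp only [Finset.mem_univ, if_true]; ring
      simp only [h2, Finset.sum_add_distrib, ← Finset.mul_sum, Finset.sum_const,
        Finset.card_univ, Fintype.card_fin, nsmul_eq_mul]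
      have hcr : ∑ i, c i * r i = t - γ := by
        rw [← hrc]; exact Finset.sum_congr rfl fun i _ => by ring
      have hpc : ∑ i, p i * c i = 0 := by
        rw [← hcp]; exact Finset.sum_congr rfl fun i _ => by ring
      rw [hcr, hpc]; ring
    rw [e1, e2, e3, e4, hrr, hws]
    ring
  -- sum of squares nonneg
  have hsq : 0 ≤ ∑ i, ∑ j, (M i j - X i j) ^ 2 :=
    Finset.sum_nonneg fun i _ => Finset.sum_nonneg fun j _ => sq_nonneg _
  have hexp : ∑ i, ∑ j, (M i j - X i j) ^ 2
      = (∑ i, ∑ j, M i j ^ 2) - 2 * (∑ i, ∑ j, M i j * X i j) + (∑ i, ∑ j, X i j ^ 2) := by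
    have h1 : ∀ i j, (M i j - X i j) ^ 2 = M i j ^ 2 - 2 * (M i j * X i j) + X i j ^ 2 := by
      intro i j; ring
    simp only [h1, Finset.sum_add_distrib, Finset.sum_sub_distrib, ← Finset.mul_sum]
  -- main lower bound for ∑ M²
  have hγn : γ * ((n:ℝ) - 1) = a - t := by
    rw [hγ]; field_simp
  have hmain : ∑ i, ∑ j, M i j ^ 2 ≥ t ^ 2 + 2 * s + (a - t) ^ 2 / ((n:ℝ) - 1) := by
    have h2 : (a - t) ^ 2 / ((n:ℝ) - 1) = γ * (a - t) := by
      rw [hγ]; field_simp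
    have hγ2 : γ ^ 2 * ((n:ℝ) - 1) = γ * (a - t) := by
      rw [show γ ^ 2 * ((n:ℝ) - 1) = γ * (γ * ((n:ℝ) - 1)) from by ring, hγn]
    linarith [hsq, hexp, hMX, hXX, hws]
  -- final algebraic inequality
  have hkey : t ^ 2 / (m - 1) ≤ (a - t) ^ 2 / ((n:ℝ) - 1) + a ^ 2 / (m - n) := by
    have := key_quad ((n:ℝ) - 1) (m - (n:ℝ)) a t hn1 hmn
    have hbd : (n:ℝ) - 1 + (m - (n:ℝ)) = m - 1 := by ring
    rwa [hbd] at this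
  have hsm : s / (m - 1) ≤ s := div_le_self hs0 (le_of_lt hm1)
  have hw2 : ∑ i, (∑ j, M i j * c j) ^ 2 = t ^ 2 + s := hws
  rw [hw2, add_div]
  have h0m : (0:ℝ) < m - 1 := by linarith
  linarith [hmain, hkey, hsm, hs0]

/-- Bochner-type inequality (Lemma 2.1) on `(ℝⁿ, g_euc, e^{−f}dv)`: if `u` is `f`-harmonic
and `m > n`, then at every point where `∇u ≠ 0` the function `h = |∇u|` is smooth near that
point and satisfies `h·Δ_f h ≥ |∇h|²/(m−1) + Hess f(∇u,∇u) − ⟨∇f,∇u⟩²/(m−n)`,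
i.e. `h·Δ_f h ≥ |∇h|²/(m−1) + Ric_{m,n}(∇u, ∇u)`. -/
theorem bochner_type_inequality (n : ℕ) (hn : 2 ≤ n)
    (u f : EuclideanSpace ℝ (Fin n) → ℝ)
    (hu : ContDiff ℝ (⊤ : ℕ∞) u) (hf : ContDiff ℝ (⊤ : ℕ∞) f)
    (hharm : ∀ x, fLap f u x = 0)
    (m : ℝ) (hm : (n : ℝ) < m)
    (x : EuclideanSpace ℝ (Fin n)) (hx : gradient u x ≠ 0) :
    ContDiffAt ℝ (⊤ : ℕ∞) (fun y => ‖gradient u y‖) x ∧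
      ‖gradient u x‖ * fLap f (fun y => ‖gradient u y‖) x ≥
        ‖gradient (fun y => ‖gradient u y‖) x‖ ^ 2 / (m - 1) +
          hess f x (gradient u x) (gradient u x) -
          ⟪gradient f x, gradient u x⟫ ^ 2 / (m - n) := by
  classical
  set h : EuclideanSpace ℝ (Fin n) → ℝ := fun y => ‖gradient u y‖ with hh
  set q : EuclideanSpace ℝ (Fin n) → ℝ := fun y => ∑ j, pd j u y ^ 2 with hqdef
  have hq_cd : ContDiff ℝ (⊤ : ℕ∞) q := ContDiff.sum fun j _ => (pd_contDiff hu j).pow 2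
  have hqnorm : ∀ y, q y = ‖gradient u y‖ ^ 2 := fun y => (norm_grad_sq u y).symm
  have h0pos : 0 < h x := norm_pos_iff.2 hx
  have hqx : q x ≠ 0 := by rw [hqnorm]; positivity
  have hhsqrt : ∀ y, h y = Real.sqrt (q y) := by
    intro y
    rw [hqnorm, Real.sqrt_sq (norm_nonneg _)]
  have hcd : ContDiffAt ℝ (⊤ : ℕ∞) h x := by
    have h1 : ContDiffAt ℝ (⊤ : ℕ∞) (fun y => Real.sqrt (q y)) x := hq_cd.contDiffAt.sqrt hqx
    exact h1.congr_of_eventuallyEq (Filter.Eventually.of_forall hhsqrt)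
  refine ⟨hcd, ?_⟩
  -- eventual differentiability of h
  have hev : ∀ᶠ y in 𝓝 x, ContDiffAt ℝ (⊤ : ℕ∞) h y := by
    filter_upwards [hq_cd.continuous.continuousAt.eventually_ne hqx] with y hy
    exact (hq_cd.contDiffAt.sqrt hy).congr_of_eventuallyEq (Filter.Eventually.of_forall hhsqrt)
  have hdiff_h : ∀ᶠ y in 𝓝 x, DifferentiableAt ℝ h y :=
    hev.mono fun y hy => hy.differentiableAt (by simp)
  have hq_eq : q = fun z => h z * h z := funext fun z => by
    rw [hqnorm z]; simp [hh]; ring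
  -- first-order identity near x
  have heq1 : ∀ i : Fin n, pd i q =ᶠ[𝓝 x] fun y => 2 * h y * pd i h y := by
    intro i
    filter_upwards [hdiff_h] with y hy
    rw [hq_eq, pd_mul hy hy i]
    ring
  have hdh : DifferentiableAt ℝ h x := hcd.differentiableAt (by simp)
  have hgx : ∀ i, pd i q x = 2 * h x * pd i h x := by
    intro i
    rw [hq_eq, pd_mul hdh hdh i]
    ring
  have hdpdh : ∀ i : Fin n, DifferentiableAt ℝ (pd i h) x := by
    intro i
    have h1 : ContDiffAt ℝ (⊤ : ℕ∞) (fderiv ℝ h) x := hcd.fderiv_right (by simp)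
    have h2 : ContDiffAt ℝ (⊤ : ℕ∞) (pd i h) x := h1.clm_apply contDiffAt_const
    exact h2.differentiableAt (by simp)
  -- second-order identity at x
  have h2nd : ∀ i, pd i (pd i q) x = 2 * pd i h x ^ 2 + 2 * h x * pd i (pd i h) x := by
    intro i
    have hfd : fderiv ℝ (pd i q) x = fderiv ℝ (fun y => 2 * h y * pd i h y) x :=
      (heq1 i).fderiv_eq
    show fderiv ℝ (pd i q) x (ee n i) = _
    rw [hfd]
    have := pd_mul (y := x) (a := fun y => 2 * h y) (b := pd i h)
      (hdh.const_mul 2) (hdpdh i) i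
    rw [show (fun y => 2 * h y * pd i h y) = fun z => (fun y => 2 * h y) z * pd i h z from rfl]
    rw [show fderiv ℝ (fun z => (fun y => 2 * h y) z * pd i h z) x (ee n i)
        = pd i (fun z => (fun y => 2 * h y) z * pd i h z) x from rfl, this]
    have hconst : pd i (fun y => 2 * h y) x = 2 * pd i h x := by
      unfold pd
      rw [fderiv_const_mul hdh]
      simp
    rw [hconst]
    ring
  -- q's derivatives from its definition
  have hpdq : ∀ (i : Fin n) (y : EuclideanSpace ℝ (Fin n)),
      pd i q y = ∑ j, 2 * pd j u y * pd i (pd j u) y := by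
    intro i y
    have hsq : q = fun z => ∑ j ∈ Finset.univ, pd j u z * pd j u z := by
      funext z
      exact Finset.sum_congr rfl fun j _ => sq (pd j u z)
    rw [hsq, pd_sum Finset.univ _ (fun j _ => (pd_contDiff hu j).mul (pd_contDiff hu j)) i y]
    refine Finset.sum_congr rfl fun j _ => ?_
    rw [pd_mul ((pd_contDiff hu j).differentiable (by simp) y)
      ((pd_contDiff hu j).differentiable (by simp) y) i]
    ring
  -- L = lap u as a function
  set L : EuclideanSpace ℝ (Fin n) → ℝ := fun y => ∑ i, pd i (pd i u) y with hLdef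
  have hL_cd : ContDiff ℝ (⊤ : ℕ∞) L := ContDiff.sum fun i _ => pd_contDiff (pd_contDiff hu i) i
  have hL : L = fun y => ∑ k, pd k f y * pd k u y := by
    funext y
    have h1 := hharm y
    rw [fLap] at h1
    have h2 : lap u y = ⟪gradient f y, gradient u y⟫ := by linarith
    rw [lap_eq] at h2
    show (∑ i, pd i (pd i u) y) = _
    rw [h2, inner_gradients]
  -- second derivative of q at x
  have hpdpdq : ∀ i : Fin n, pd i (pd i q) x
      = ∑ j, (2 * pd i (pd j u) x ^ 2 + 2 * pd j u x * pd i (pd i (pd j u)) x) := by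
    intro i
    have hfun : pd i q = fun y => ∑ j ∈ Finset.univ, 2 * pd j u y * pd i (pd j u) y :=
      funext fun y => hpdq i y
    rw [hfun, pd_sum Finset.univ _ (fun j _ =>
      ((contDiff_const.mul (pd_contDiff hu j)).mul (pd_contDiff (pd_contDiff hu j) i))) i x]
    refine Finset.sum_congr rfl fun j _ => ?_
    have hmul := pd_mul (y := x) (a := fun y => 2 * pd j u y) (b := pd i (pd j u))
      (((pd_contDiff hu j).differentiable (by simp) x).const_mul 2)
      ((pd_contDiff (pd_contDiff hu j)  i).differentiable (by simp) x) i
    rw [show (fun y => 2 * pd j u y * pd i (pd j u) y)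
        = fun z => (fun y => 2 * pd j u y) z * pd i (pd j u) z from rfl, hmul]
    have hconst : pd i (fun y => 2 * pd j u y) x = 2 * pd i (pd j u) x := by
      show fderiv ℝ (fun y => 2 * pd j u y) x (ee n i) = _
      rw [fderiv_const_mul ((pd_contDiff hu j).differentiable (by simp) x)]
      simp [pd]
    rw [hconst]
    ring
  -- third derivative commute
  have hthird : ∀ j : Fin n, ∑ i, pd i (pd i (pd j u)) x = pd j L x := by
    intro j
    have hcomm : ∀ i : Fin n, pd i (pd i (pd j u)) = pd j (pd i (pd i u)) := by
      intro i
      rw [pd_comm hu i j]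
      exact pd_comm (pd_contDiff hu i) i j
    have h1 : ∑ i, pd i (pd i (pd j u)) x = ∑ i, pd j (pd i (pd i u)) x :=
      Finset.sum_congr rfl fun i _ => by rw [hcomm i]
    rw [h1, hLdef]
    rw [← pd_sum Finset.univ _ (fun i _ => pd_contDiff (pd_contDiff hu i) i) j x]
  -- scalar abbreviations at the point x
  set U : Fin n → ℝ := fun i => pd i u x with hUdef
  set Fi : Fin n → ℝ := fun i => pd i f x with hFidef
  set M : Fin n → Fin n → ℝ := fun i j => pd i (pd j u) x with hMdef
  set G : Fin n → ℝ := fun i => pd i h x with hGdef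
  -- derivative of L at x
  have hpdL : ∀ j : Fin n, pd j L x
      = ∑ k, (pd j (pd k f) x * U k + Fi k * pd j (pd k u) x) := by
    intro j
    rw [hL, show (fun y => ∑ k, pd k f y * pd k u y)
      = fun y => ∑ k ∈ Finset.univ, pd k f y * pd k u y from rfl]
    rw [pd_sum Finset.univ _ (fun k _ => (pd_contDiff hf k).mul (pd_contDiff hu k)) j x]
    refine Finset.sum_congr rfl fun k _ => ?_
    rw [pd_mul ((pd_contDiff hf k).differentiable (by simp) x)
      ((pd_contDiff hu k).differentiable (by simp) x) j]
  -- two expressions for lap q x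
  have hlapq1 : lap q x = 2 * (∑ i, G i ^ 2) + 2 * h x * lap h x := by
    rw [lap_eq]
    rw [Finset.sum_congr rfl fun i _ => h2nd i]
    rw [Finset.sum_add_distrib, lap_eq]
    rw [← Finset.mul_sum, ← Finset.mul_sum]
  have hlapq2 : lap q x = 2 * (∑ i, ∑ j, M i j ^ 2) + 2 * ∑ j, U j * pd j L x := by
    rw [lap_eq]
    rw [Finset.sum_congr rfl fun i _ => hpdpdq i]
    have e1 : ∀ i : Fin n, ∑ j, (2 * pd i (pd j u) x ^ 2 + 2 * pd j u x * pd i (pd i (pd j u)) x)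
        = (∑ j, 2 * M i j ^ 2) + ∑ j, 2 * U j * pd i (pd i (pd j u)) x := by
      intro i; rw [Finset.sum_add_distrib]
    rw [Finset.sum_congr rfl fun i _ => e1 i, Finset.sum_add_distrib]
    have e2 : ∑ i : Fin n, ∑ j, 2 * M i j ^ 2 = 2 * ∑ i, ∑ j, M i j ^ 2 := by
      rw [Finset.mul_sum]
      exact Finset.sum_congr rfl fun i _ => by rw [Finset.mul_sum]
    have e3 : ∑ i : Fin n, ∑ j, 2 * U j * pd i (pd i (pd j u)) x
        = 2 * ∑ j, U j * pd j L x := by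
      rw [Finset.sum_comm]
      rw [Finset.mul_sum]
      refine Finset.sum_congr rfl fun j _ => ?_
      rw [← Finset.mul_sum, hthird j]
      ring
    rw [e2, e3]
  -- inner products and norms at x
  have hfh : ⟪gradient f x, gradient h x⟫ = ∑ i, Fi i * G i := inner_gradients f h x
  have hfu : ⟪gradient f x, gradient u x⟫ = ∑ i, Fi i * U i := inner_gradients f u x
  have hnormgh : ‖gradient h x‖ ^ 2 = ∑ i, G i ^ 2 := norm_grad_sq h x
  have hMsymm : ∀ i j, M i j = M j i := fun i j => congrFun (pd_comm hu i j) x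
  -- the Hessian of f evaluated at the gradient
  have hhess : hess f x (gradient u x) (gradient u x) = ∑ j, U j * ∑ i, U i * pd i (pd j f) x := by
    rw [hess_eq_sum hf]
    refine Finset.sum_congr rfl fun j _ => ?_
    rw [gradient_coord]
    congr 1
    exact Finset.sum_congr rfl fun i _ => by rw [gradient_coord]
  -- trace identity from harmonicity
  have htr : ∑ i, M i i = ∑ i, Fi i * U i := by
    have h1 : L x = ∑ i, M i i := rfl
    have h2 : L x = ∑ k, Fi k * U k := by rw [hL]
    rw [← h1, h2]
  -- gradient of h in terms of M and U
  have hgrel : ∀ i, h x * G i = ∑ j, M i j * U j := by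
    intro i
    have h1 := (hgx i).symm.trans (hpdq i x)
    have h2 : ∑ j, 2 * pd j u x * pd i (pd j u) x = 2 * ∑ j, M i j * U j := by
      rw [Finset.mul_sum]
      exact Finset.sum_congr rfl fun j _ => by ring
    rw [h2] at h1
    linarith
  have hsumU : ∑ i, U i ^ 2 = h x ^ 2 := by
    have h1 : q x = ∑ i, U i ^ 2 := rfl
    rw [← h1, hqnorm]
  have h0ne : h x ≠ 0 := ne_of_gt h0pos
  -- apply the algebraic lemma with the unit vector c = U / h x
  set c : Fin n → ℝ := fun i => U i / h x with hcdef
  have hc : ∑ i, c i ^ 2 = 1 := by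
    have e : ∑ i, c i ^ 2 = (∑ i, U i ^ 2) / h x ^ 2 := by
      rw [Finset.sum_div]
      exact Finset.sum_congr rfl fun i _ => by rw [hcdef]; ring
    rw [e, hsumU, div_self (pow_ne_zero 2 h0ne)]
  have hgc : ∀ i, ∑ j, M i j * c j = G i := by
    intro i
    have h1 : ∑ j, M i j * c j = (∑ j, M i j * U j) / h x := by
      rw [Finset.sum_div]
      exact Finset.sum_congr rfl fun j _ => by rw [hcdef]; ring
    rw [h1, ← hgrel i, mul_div_cancel_left₀ _ h0ne]
  have halg := alg n hn m hm M hMsymm c hc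
  rw [Finset.sum_congr rfl fun i _ => congrArg (· ^ 2) (hgc i), htr] at halg
  -- assemble everything
  have hA2 : h x * ⟪gradient f x, gradient h x⟫ = ∑ i, Fi i * ∑ j, M i j * U j := by
    rw [hfh, Finset.mul_sum]
    exact Finset.sum_congr rfl fun i _ => by rw [← hgrel i]; ring
  have hC : ∑ j, U j * ∑ k, Fi k * pd j (pd k u) x = ∑ i, Fi i * ∑ j, M i j * U j := by
    have e1 : ∑ j, U j * ∑ k, Fi k * pd j (pd k u) x = ∑ j, ∑ k, U j * (Fi k * M j k) := by
      refine Finset.sum_congr rfl fun j _ => ?_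
      rw [Finset.mul_sum]
    rw [e1, Finset.sum_comm]
    refine Finset.sum_congr rfl fun k _ => ?_
    rw [Finset.mul_sum]
    refine Finset.sum_congr rfl fun j _ => ?_
    rw [hMsymm k j]
    ring
  have hHF : ∑ j, U j * ∑ k, pd j (pd k f) x * U k
      = ∑ j, U j * ∑ i, U i * pd i (pd j f) x := by
    have e1 : ∑ j, U j * ∑ k, pd j (pd k f) x * U k = ∑ j, ∑ k, U j * (pd j (pd k f) x * U k) := by
      refine Finset.sum_congr rfl fun j _ => ?_
      rw [Finset.mul_sum]
    have e2 : ∑ j, U j * ∑ i, U i * pd i (pd j f) x = ∑ j, ∑ i, U j * (U i * pd i (pd j f) x) := by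
      refine Finset.sum_congr rfl fun j _ => ?_
      rw [Finset.mul_sum]
    rw [e1, e2, Finset.sum_comm]
    exact Finset.sum_congr rfl fun k _ => Finset.sum_congr rfl fun j _ => by ring
  have hT3 : ∑ j, U j * pd j L x
      = (∑ j, U j * ∑ k, pd j (pd k f) x * U k) + ∑ j, U j * ∑ k, Fi k * pd j (pd k u) x := by
    rw [← Finset.sum_add_distrib]
    refine Finset.sum_congr rfl fun j _ => ?_
    rw [hpdL j, Finset.sum_add_distrib]
    ring
  -- final computation of h x * fLap f h x
  have hfinal : h x * fLap f h x
      = (∑ i, ∑ j, M i j ^ 2) + (∑ j, U j * ∑ i, U i * pd i (pd j f) x) - ∑ i, G i ^ 2 := by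
    rw [fLap]
    have e1 : h x * lap h x
        = (∑ i, ∑ j, M i j ^ 2) + (∑ j, U j * pd j L x) - ∑ i, G i ^ 2 := by
      linarith [hlapq1, hlapq2]
    rw [mul_sub, e1, hA2, hT3, hC, hHF]
    ring
  rw [ge_iff_le, hfinal, hnormgh, hhess, hfu]
  linarith [halg]



end
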